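/- Let (W,S) be an irreducible infinite right-angled Coxeter system. For any v, w ∈ W there exists u ∈ W such that |v u w| = |v| + |u| + |w|. -/

import Mathlib

/-!
In a right-angled Coxeter group, two generators `a`, `b` with `m(a,b) = ∞` are never both
right descents of an element: otherwise it would have reduced words ending in alternating
words `…abab` of every length. Hence, for a generator `q` that is not a right descent of `x`,
the right descents of `x q` are `q` together with those descents of `x` that commute with `q`.
Two consequences follow. First, `|x y| = |x| + |y|` as soon as no generator is both a right
descent of `x` and a left descent of `y`. Second, irreducibility and infiniteness give every
generator `p` a partner `q` with `m(p,q) = ∞`; multiplying `v` on the right by such partners,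
one letter at a time and without cancellation, yields `v u` none of whose right descents is a
left descent of `w` (these form a finite set of pairwise commuting generators), and then
`|v u w| = |v| + |u| + |w|`.

The exchange property used throughout comes from the Björner–Brenti representation of `W`
on `W × ℤ/2`, whose defining relations reduce to commutations in the right-angled case.
-/

open List

/-- Mathlib encodes `m(i,j) = ∞` as `M i j = 0`. -/
def CoxeterMatrix.IsRightAngled {B : Type*} (M : CoxeterMatrix B) : Prop :=
  ∀ i j : B, i ≠ j → M i j = 2 ∨ M i j = 0

namespace CoxeterMatrix

variable {B : Type*} {M : CoxeterMatrix B}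

theorem IsRightAngled.isLiftable {G : Type*} [Monoid G] (hM : M.IsRightAngled) {g : B → G}
    (hg : ∀ i, g i * g i = 1) (hcomm : ∀ i j, M i j = 2 → Commute (g i) (g j)) :
    M.IsLiftable g := by
  intro i j
  rcases eq_or_ne i j with rfl | hij
  · simpa [M.diagonal] using hg i
  rcases hM i j hij with h | h
  · rw [h, sq, (hcomm j i (M.symmetric i j ▸ h)).mul_mul_mul_comm, hg, hg, one_mul]
  · rw [h, pow_zero]

end CoxeterMatrix

section ConjFlip

variable {G : Type*} [Group G]

theorem conj_eq_iff_of_commute {g h : G} (hgh : Commute g h) (t : G) :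
    h * t * h⁻¹ = g ↔ t = g := by
  rw [mul_inv_eq_iff_eq_mul, hgh.eq, mul_left_cancel_iff]

open Classical in
noncomputable def conjFlip (g : G) : Equiv.Perm (G × ZMod 2) where
  toFun p := (g * p.1 * g⁻¹, p.2 + if p.1 = g then 1 else 0)
  invFun p := (g⁻¹ * p.1 * g, p.2 + if p.1 = g then 1 else 0)
  left_inv := by
    rintro ⟨t, e⟩
    simp only [conj_eq_iff_of_commute (Commute.refl g), Prod.mk.injEq]
    constructor
    · group
    · rw [add_assoc, CharTwo.add_self_eq_zero, add_zero]
  right_inv := by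
    rintro ⟨t, e⟩
    have : g⁻¹ * t * g = g ↔ t = g := by
      rw [mul_assoc, inv_mul_eq_iff_eq_mul, mul_right_cancel_iff, eq_comm]
    simp only [this, Prod.mk.injEq]
    constructor
    · group
    · rw [add_assoc, CharTwo.add_self_eq_zero, add_zero]

open Classical in
theorem conjFlip_apply (g t : G) (e : ZMod 2) :
    conjFlip g (t, e) = (g * t * g⁻¹, e + if t = g then 1 else 0) := rfl

open Classical in
theorem conjFlip_mul_self {g : G} (hg : g * g = 1) : conjFlip g * conjFlip g = 1 := by
  ext ⟨t, e⟩ <;> simp only [Equiv.Perm.mul_apply, conjFlip_apply, Equiv.Perm.one_apply]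
  · rw [inv_eq_of_mul_eq_one_right hg, ← mul_assoc, ← mul_assoc, hg, one_mul, mul_assoc, hg,
      mul_one]
  · rw [if_congr (conj_eq_iff_of_commute (Commute.refl g) t) rfl rfl, add_assoc,
      CharTwo.add_self_eq_zero, add_zero]

open Classical in
theorem Commute.conjFlip {g h : G} (hgh : Commute g h) : Commute (conjFlip g) (conjFlip h) := by
  ext ⟨t, e⟩ <;> simp only [Equiv.Perm.mul_apply, conjFlip_apply]
  · calc g * (h * t * h⁻¹) * g⁻¹ = (g * h) * t * (g * h)⁻¹ := by group
      _ = (h * g) * t * (h * g)⁻¹ := by rw [hgh.eq]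
      _ = h * (g * t * g⁻¹) * h⁻¹ := by group
  · rw [if_congr (conj_eq_iff_of_commute hgh t) rfl rfl,
      if_congr (conj_eq_iff_of_commute hgh.symm t) rfl rfl, add_right_comm]

end ConjFlip

namespace CoxeterSystem

variable {B W : Type*} [Group W] {M : CoxeterMatrix B} (cs : CoxeterSystem M W)

local prefix:100 "s" => cs.simple
local prefix:100 "π" => cs.wordProd
local prefix:100 "ℓ" => cs.length
local prefix:100 "ris" => cs.rightInvSeq

theorem commute_simple_of_eq_two {i j : B} (h : M i j = 2) : Commute (s i) (s j) := by
  have h' : s i * s j * (s i * s j) = 1 := by rw [← sq, ← h, simple_mul_simple_pow]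
  simpa [Commute, SemiconjBy, cs.inv_simple] using eq_inv_of_mul_eq_one_left h'

theorem dist_le_length_mul {X : Type*} [PseudoMetricSpace X] (f : W →* X ≃ᵢ X) (x : X)
    {C : ℝ} (hC : ∀ i, dist (f (s i) x) x ≤ C) (w : W) : dist (f w x) x ≤ ℓ w * C := by
  suffices h : ∀ ω : List B, dist (f (π ω) x) x ≤ ω.length * C by
    obtain ⟨ω, hω, rfl⟩ := cs.exists_isReduced w
    rw [hω]
    exact h ω
  intro ω
  induction ω with
  | nil => simp
  | cons i ω ih =>
    calc dist (f (π (i :: ω)) x) x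
        ≤ dist (f (s i) (f (π ω) x)) (f (s i) x) + dist (f (s i) x) x := by
          rw [wordProd_cons, map_mul, IsometryEquiv.mul_apply]
          exact dist_triangle _ _ _
      _ ≤ ω.length * C + C := by
          rw [IsometryEquiv.dist_eq]
          exact add_le_add ih (hC i)
      _ = (i :: ω).length * C := by push_cast [length_cons]; ring

section RightAngled

variable (hM : M.IsRightAngled)
include hM

theorem simple_injective : Function.Injective cs.simple := by
  classical
  intro e f hef
  by_contra hne
  let χ : W →* ℤˣ := cs.lift ⟨fun i => if i = e then -1 else 1,
    hM.isLiftable (fun i => by split_ifs <;> simp) (fun _ _ _ => Commute.all _ _)⟩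
  have := congrArg χ hef
  simp [χ, Ne.symm hne] at this

noncomputable def conjFlipRep : W →* Equiv.Perm (W × ZMod 2) :=
  cs.lift ⟨fun i => conjFlip (s i),
    hM.isLiftable (fun i => conjFlip_mul_self (cs.simple_mul_simple_self i))
      (fun _ _ h => (cs.commute_simple_of_eq_two h).conjFlip)⟩

theorem conjFlipRep_simple (i : B) : cs.conjFlipRep hM (s i) = conjFlip (s i) :=
  cs.lift_apply_simple _ i

open Classical in
theorem conjFlipRep_wordProd (ω : List B) (t : W) (e : ZMod 2) :
    cs.conjFlipRep hM (π ω) (t, e) = (π ω * t * (π ω)⁻¹, e + (ris ω).count t) := by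
  induction ω using List.reverseRecOn generalizing t e with
  | nil => simp [rightInvSeq]
  | append_singleton ω i ih =>
    have hcount : (ris (ω ++ [i])).count t = (ris ω).count (s i * t * s i) +
        if t = s i then 1 else 0 := by
      rw [← concat_eq_append, rightInvSeq_concat, concat_eq_append, count_append, count_singleton,
        ← count_map_of_injective _ _ (MulAut.conj (s i)).injective (s i * t * s i)]
      simp only [MulAut.conj_apply, cs.inv_simple, mul_assoc, simple_mul_simple_self, mul_one,
        simple_mul_simple_cancel_left, beq_iff_eq, @eq_comm _ (s i) t]
    rw [wordProd_append, wordProd_singleton, map_mul, Equiv.Perm.mul_apply, conjFlipRep_simple,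
      conjFlip_apply, ih, hcount, cs.inv_simple]
    refine Prod.ext ?_ ?_
    · simp only [mul_inv_rev, cs.inv_simple, mul_assoc]
    · push_cast
      ring

open Classical in
theorem cast_count_rightInvSeq_eq_of_wordProd_eq {ω ω' : List B} (h : π ω = π ω') (t : W) :
    ((ris ω).count t : ZMod 2) = (ris ω').count t := by
  simpa [conjFlipRep_wordProd] using congrArg (fun w => (cs.conjFlipRep hM w (t, 0)).2) h

theorem mem_rightInvSeq_iff_isRightDescent {ω : List B} (hω : cs.IsReduced ω) (i : B) :
    s i ∈ ris ω ↔ cs.IsRightDescent (π ω) i := by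
  classical
  refine ⟨fun h => (cs.isRightInversion_simple_iff_isRightDescent _ _).mp
    (cs.isRightInversion_of_mem_rightInvSeq hω h), fun h => ?_⟩
  obtain ⟨σ, hσ, hσω⟩ := cs.exists_isReduced (π ω * s i)
  have hprod : π (σ.concat i) = π ω := by
    rw [wordProd_concat, ← hσω, simple_mul_simple_cancel_right]
  have hred : cs.IsReduced (σ.concat i) := by
    rw [IsReduced, hprod, length_concat, ← hσ, ← hσω, cs.isRightDescent_iff.mp h]
  have hone : (ris (σ.concat i)).count (s i) = 1 :=
    count_eq_one_of_mem hred.nodup_rightInvSeq <| by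
      rw [rightInvSeq_concat, concat_eq_append]
      exact mem_append_right _ (mem_singleton_self _)
  have hodd := cs.cast_count_rightInvSeq_eq_of_wordProd_eq hM hprod (s i)
  rw [hone, Nat.cast_one] at hodd
  refine count_pos_iff.mp (Nat.pos_of_ne_zero fun h0 => ?_)
  rw [h0, Nat.cast_zero] at hodd
  exact zero_ne_one hodd.symm

theorem exists_wordProd_mul_simple_eq_eraseIdx {ω : List B} (hω : cs.IsReduced ω) {i : B}
    (h : cs.IsRightDescent (π ω) i) : ∃ j < ω.length, π ω * s i = π (ω.eraseIdx j) := by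
  obtain ⟨j, hj, hget⟩ :=
    getElem_of_mem ((cs.mem_rightInvSeq_iff_isRightDescent hM hω i).mpr h)
  refine ⟨j, by simpa using hj, ?_⟩
  rw [← hget, ← getD_eq_getElem _ 1, wordProd_mul_getD_rightInvSeq]

open Classical in
noncomputable def dihedralReflection (a b : B) : B → ℤ ≃ᵢ ℤ :=
  fun i => if i = a then IsometryEquiv.subLeft 1
    else if i = b then IsometryEquiv.subLeft (-1) else 1

theorem isLiftable_dihedralReflection {a b : B} (hab : M a b = 0) :
    M.IsLiftable (dihedralReflection a b) := by
  refine hM.isLiftable (fun i => ?_) (fun i j hij => ?_)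
  · unfold dihedralReflection
    split_ifs <;> ext x <;> simp
  · unfold dihedralReflection
    split_ifs <;> simp_all [M.symmetric]

theorem isReduced_alternatingWord {a b : B} (hab : M a b = 0) (k : ℕ) :
    cs.IsReduced (alternatingWord a b k) := by
  -- `s a * s b` acts on `ℤ` as translation by `2`, while each generator moves `0` by at most `1`.
  let f : W →* ℤ ≃ᵢ ℤ := cs.lift ⟨_, isLiftable_dihedralReflection hM hab⟩
  have hfa : f (s a) = IsometryEquiv.subLeft 1 := by simp [f, dihedralReflection]
  have hfb : f (s b) = IsometryEquiv.subLeft (-1) := by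
    have : b ≠ a := by rintro rfl; simp at hab
    simp [f, dihedralReflection, this]
  have hpow : ∀ m : ℕ, f ((s a * s b) ^ m) 0 = 2 * m := by
    intro m
    induction m with
    | zero => simp
    | succ m ih =>
      rw [pow_succ', map_mul, IsometryEquiv.mul_apply, ih]
      simp [hfa, hfb]
      ring
  have hdist : dist (f (π (alternatingWord a b k)) 0) 0 = k := by
    suffices (f (π (alternatingWord a b k)) 0).natAbs = k by
      rw [Int.dist_eq, Int.cast_zero, sub_zero, ← Int.cast_abs, Int.abs_eq_natAbs, this]; rfl
    rw [prod_alternatingWord_eq_mul_pow, map_mul, IsometryEquiv.mul_apply, hpow]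
    rcases Nat.even_or_odd' k with ⟨m, rfl | rfl⟩
    · simp
      omega
    · simp [hfb, Nat.mul_add_div]
      omega
  have hC : ∀ i, dist (f (s i) 0) 0 ≤ 1 := by
    intro i
    simp only [f, lift_apply_simple, dihedralReflection]
    split_ifs <;> simp
  have hle := cs.dist_le_length_mul f 0 hC (π (alternatingWord a b k))
  rw [hdist, mul_one, Nat.cast_le] at hle
  exact le_antisymm (cs.length_wordProd_le _) (by rwa [length_alternatingWord])

theorem exists_isReduced_append_alternatingWord {a b : B} (hab : M a b = 0) {y : W}
    (ha : cs.IsRightDescent y a) (hb : cs.IsRightDescent y b) (k : ℕ) :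
    ∃ ζ, cs.IsReduced (ζ ++ alternatingWord a b k) ∧
      y = π (ζ ++ alternatingWord a b k) := by
  induction k generalizing a b with
  | zero => simpa [alternatingWord] using cs.exists_isReduced y
  | succ k ih =>
    obtain ⟨ζ, hred, rfl⟩ := ih (M.symmetric a b ▸ hab) hb ha
    obtain ⟨j, hj, herase⟩ := cs.exists_wordProd_mul_simple_eq_eraseIdx hM hred hb
    rw [length_append, length_alternatingWord] at hj
    -- The exchange cannot delete a letter of the alternating word, which is reduced.
    by_cases hjζ : j < ζ.length
    · have hprod : π (ζ.eraseIdx j ++ alternatingWord a b (k + 1)) =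
          π (ζ ++ alternatingWord b a k) := by
        rw [alternatingWord_succ, concat_eq_append, ← append_assoc, wordProd_append,
          wordProd_singleton, ← eraseIdx_append_of_lt_length hjζ, ← herase,
          simple_mul_simple_cancel_right]
      refine ⟨ζ.eraseIdx j, ?_, hprod.symm⟩
      have := length_eraseIdx_add_one hjζ
      rw [IsReduced, hprod, hred]
      simp only [length_append, length_alternatingWord]
      omega
    · have hdel : π (alternatingWord a b (k + 1)) =
          π ((alternatingWord b a k).eraseIdx (j - ζ.length)) := by
        apply mul_left_cancel (a := π ζ)
        rw [alternatingWord_succ, wordProd_concat, ← mul_assoc, ← wordProd_append, herase,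
          eraseIdx_append_of_length_le (by omega), wordProd_append]
      have hlen := length_eraseIdx_add_one (l := alternatingWord b a k) (i := j - ζ.length)
        (by rw [length_alternatingWord]; omega)
      have hle := cs.length_wordProd_le ((alternatingWord b a k).eraseIdx (j - ζ.length))
      have := cs.isReduced_alternatingWord hM hab (k + 1)
      rw [IsReduced, hdel, length_alternatingWord] at this
      rw [length_alternatingWord] at hlen
      omega

theorem not_isRightDescent_and_isRightDescent {a b : B} (hab : M a b = 0) (y : W) :
    ¬(cs.IsRightDescent y a ∧ cs.IsRightDescent y b) := by
  rintro ⟨ha, hb⟩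
  obtain ⟨ζ, hred, hy⟩ := cs.exists_isReduced_append_alternatingWord hM hab ha hb (ℓ y + 1)
  have := hred.eq
  rw [← hy, length_append, length_alternatingWord] at this
  omega

theorem eq_two_and_isRightDescent_of_isRightDescent_mul_simple {x : W} {q e : B}
    (hq : ¬cs.IsRightDescent x q) (he : cs.IsRightDescent (x * s q) e) (heq : e ≠ q) :
    M e q = 2 ∧ cs.IsRightDescent x e := by
  have hlen := cs.not_isRightDescent_iff.mp hq
  have hxq : cs.IsRightDescent (x * s q) q := by
    rw [IsRightDescent, simple_mul_simple_cancel_right, hlen]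
    exact Nat.lt_succ_self _
  have h2 : M e q = 2 := (hM e q heq).resolve_right fun h0 =>
    cs.not_isRightDescent_and_isRightDescent hM h0 _ ⟨he, hxq⟩
  refine ⟨h2, ?_⟩
  obtain ⟨ρ, hρ, rfl⟩ := cs.exists_isReduced x
  have hprod : π (ρ ++ [q]) = π ρ * s q := by rw [wordProd_append, wordProd_singleton]
  have hred : cs.IsReduced (ρ ++ [q]) := by
    rw [IsReduced, hprod, hlen, hρ, length_append, length_singleton]
  obtain ⟨j, hj, herase⟩ := cs.exists_wordProd_mul_simple_eq_eraseIdx hM hred (hprod ▸ he)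
  rw [length_append, length_singleton] at hj
  rcases (Nat.lt_succ_iff.mp hj).lt_or_eq with hjρ | rfl
  · rw [hprod, eraseIdx_append_of_lt_length hjρ, wordProd_append, wordProd_singleton] at herase
    have hxe : π ρ * s e = π (ρ.eraseIdx j) :=
      calc π ρ * s e = π ρ * s q * s e * s q := by
            rw [mul_assoc _ (s e), (cs.commute_simple_of_eq_two h2).eq, ← mul_assoc,
              simple_mul_simple_cancel_right]
        _ = π (ρ.eraseIdx j) := by rw [herase, simple_mul_simple_cancel_right]
    rw [IsRightDescent, hxe, hρ]
    have := length_eraseIdx_add_one hjρ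
    have := cs.length_wordProd_le (ρ.eraseIdx j)
    omega
  · rw [eraseIdx_append_of_length_le le_rfl, Nat.sub_self, eraseIdx_cons_zero, append_nil,
      hprod, mul_assoc, mul_eq_left] at herase
    refine absurd (cs.simple_injective hM ?_) heq
    rw [eq_inv_of_mul_eq_one_right herase, inv_simple]

theorem mem_of_isRightDescent_wordProd {ω : List B} (hω : cs.IsReduced ω) {e : B}
    (he : cs.IsRightDescent (π ω) e) : e ∈ ω := by
  induction ω using List.reverseRecOn with
  | nil => exact absurd he (cs.not_isRightDescent_one e)
  | append_singleton ω q ih =>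
    rw [mem_append, mem_singleton]
    by_cases heq : e = q
    · exact Or.inr heq
    have hω' : cs.IsReduced ω := by simpa using hω.take ω.length
    have hq : ¬cs.IsRightDescent (π ω) q := by
      rw [not_isRightDescent_iff, ← wordProd_singleton, ← wordProd_append, hω, hω',
        length_append, length_singleton]
    rw [wordProd_append, wordProd_singleton] at he
    exact Or.inl
      (ih hω' (cs.eq_two_and_isRightDescent_of_isRightDescent_mul_simple hM hq he heq).2)

theorem finite_setOf_isRightDescent (w : W) : {i | cs.IsRightDescent w i}.Finite := by
  classical
  obtain ⟨ω, hω, rfl⟩ := cs.exists_isReduced w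
  exact ω.toFinset.finite_toSet.subset fun i hi =>
    mem_toFinset.mpr (cs.mem_of_isRightDescent_wordProd hM hω hi)

theorem length_mul_of_forall_not_isLeftDescent {x y : W}
    (h : ∀ i, cs.IsRightDescent x i → ¬cs.IsLeftDescent y i) :
    ℓ (x * y) = ℓ x + ℓ y := by
  obtain ⟨n, hn⟩ : ∃ n, ℓ y = n := ⟨_, rfl⟩
  induction n generalizing x y with
  | zero => simp [cs.length_eq_zero_iff.mp hn]
  | succ n ih =>
    obtain ⟨c, hc⟩ := cs.exists_leftDescent_of_ne_one (w := y) (by rintro rfl; simp at hn)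
    have hxc : ¬cs.IsRightDescent x c := fun hx => h c hx hc
    have hcy := cs.isLeftDescent_iff.mp hc
    have hcy' : ¬cs.IsLeftDescent (s c * y) c := by
      rw [not_isLeftDescent_iff, simple_mul_simple_cancel_left, hcy]
    have hdisj : ∀ e, cs.IsRightDescent (x * s c) e → ¬cs.IsLeftDescent (s c * y) e := by
      intro e hxe hye
      have hec : e ≠ c := by rintro rfl; exact hcy' hye
      obtain ⟨h2, hxe'⟩ :=
        cs.eq_two_and_isRightDescent_of_isRightDescent_mul_simple hM hxc hxe hec
      refine h e hxe' ?_
      have hey : s e * y = s c * (s e * (s c * y)) := by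
        rw [← mul_assoc, ← mul_assoc, ← (cs.commute_simple_of_eq_two h2).eq,
          simple_mul_simple_cancel_right]
      have := cs.length_mul_le (s c) (s e * (s c * y))
      rw [IsLeftDescent] at hye
      rw [IsLeftDescent, hey]
      rw [length_simple] at this
      omega
    have := ih hdisj (by omega)
    rw [mul_assoc, simple_mul_simple_cancel_left, cs.not_isRightDescent_iff.mp hxc] at this
    omega

theorem exists_length_mul_eq_add_forall_not_isRightDescent (hnb : ∀ p, ∃ q, M p q = 0)
    (E : Finset B) (hE : ∀ e ∈ E, ∀ f ∈ E, M e f ≠ 0) (x : W) :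
    ∃ u, ℓ (x * u) = ℓ x + ℓ u ∧ ∀ e ∈ E, ¬cs.IsRightDescent (x * u) e := by
  classical
  obtain ⟨n, hn⟩ : ∃ n, (E.filter (cs.IsRightDescent x)).card = n := ⟨_, rfl⟩
  induction n using Nat.strong_induction_on generalizing x with
  | _ n ih =>
  by_cases hx : ∃ p ∈ E, cs.IsRightDescent x p
  swap
  · push Not at hx
    exact ⟨1, by simp, by simpa using hx⟩
  obtain ⟨p, hpE, hp⟩ := hx
  obtain ⟨q, hpq⟩ := hnb p
  have hq : ¬cs.IsRightDescent x q := fun hq =>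
    cs.not_isRightDescent_and_isRightDescent hM hpq x ⟨hp, hq⟩
  have hqE : q ∉ E := fun hqE => hE p hpE q hqE hpq
  -- `q ∉ E`, and passing from `x` to `x * s q` loses the descent `p`.
  have hsub : E.filter (cs.IsRightDescent (x * s q)) ⊂ E.filter (cs.IsRightDescent x) := by
    refine (Finset.ssubset_iff_of_subset fun e => ?_).mpr ⟨p, ?_, fun hp' => ?_⟩
    · simp only [Finset.mem_filter]
      exact fun ⟨heE, he⟩ => ⟨heE, (cs.eq_two_and_isRightDescent_of_isRightDescent_mul_simple
        hM hq he (ne_of_mem_of_not_mem heE hqE)).2⟩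
    · exact Finset.mem_filter.mpr ⟨hpE, hp⟩
    · have hpq' : p ≠ q := by rintro rfl; simp at hpq
      have := (cs.eq_two_and_isRightDescent_of_isRightDescent_mul_simple hM hq
        (Finset.mem_filter.mp hp').2 hpq').1
      omega
  obtain ⟨u, hu, hEu⟩ := ih _ (hn ▸ Finset.card_lt_card hsub) (x * s q) rfl
  refine ⟨s q * u, ?_, by simpa only [mul_assoc] using hEu⟩
  have h1 := cs.length_mul_le (s q) u
  have h2 := cs.length_mul_le x (s q * u)
  rw [length_simple] at h1
  rw [← mul_assoc] at h2 ⊢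
  rw [hu, cs.not_isRightDescent_iff.mp hq] at h2 ⊢
  omega

include cs in
theorem exists_eq_zero_of_irreducible [Infinite W]
    (hirr : ∀ T : Set B, (∀ i ∈ T, ∀ j ∉ T, M i j = 2) → T = ∅ ∨ T = Set.univ)
    (i : B) :
    ∃ j, M i j = 0 := by
  by_contra! h
  have hisolated : ∀ i' ∈ ({i} : Set B), ∀ j ∉ ({i} : Set B), M i' j = 2 := by
    rintro i' rfl j hj
    exact (hM i' j (Ne.symm hj)).resolve_right (h j)
  have hB : ∀ j, j = i := by
    rcases hirr {i} hisolated with hT | hT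
    · simp at hT
    · simpa [Set.eq_univ_iff_forall] using hT
  have hW : ∀ w : W, w ∈ ({1, s i} : Set W) := fun w => by
    refine cs.simple_induction_left w (by simp) fun w j hw => ?_
    rw [hB j]
    rcases hw with rfl | rfl
    · simp
    · simp [simple_mul_simple_self]
  have : Finite W := Set.finite_univ_iff.mp ((Set.toFinite _).subset fun w _ => hW w)
  exact not_finite W

end RightAngled

end CoxeterSystem

/-- Let `(W,S)` be an irreducible infinite right-angled Coxeter system. For any `v, w ∈ W`
there exists `u ∈ W` with `|v * u * w| = |v| + |u| + |w|`. -/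
theorem irreducible_infinite_right_angled_exists_regular_join
    {B W : Type*} [Group W] (M : CoxeterMatrix B) (cs : CoxeterSystem M W)
    [Infinite W]
    (rightAngled : ∀ i j : B, i ≠ j → M i j = 2 ∨ M i j = 0)
    (irreducible : ∀ T : Set B, (∀ i ∈ T, ∀ j ∉ T, M i j = 2) → T = ∅ ∨ T = Set.univ)
    (v w : W) :
    ∃ u : W, cs.length (v * u * w) = cs.length v + cs.length u + cs.length w := by
  have hM : M.IsRightAngled := rightAngled
  have hfin : {i | cs.IsLeftDescent w i}.Finite := by
    simpa only [cs.isRightDescent_inv_iff] using cs.finite_setOf_isRightDescent hM w⁻¹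
  have hclique : ∀ e ∈ hfin.toFinset, ∀ f ∈ hfin.toFinset, M e f ≠ 0 := by
    intro e he f hf h0
    rw [Set.Finite.mem_toFinset] at he hf
    exact cs.not_isRightDescent_and_isRightDescent hM h0 w⁻¹
      ⟨cs.isRightDescent_inv_iff.mpr he, cs.isRightDescent_inv_iff.mpr hf⟩
  obtain ⟨u, hu, hvu⟩ := cs.exists_length_mul_eq_add_forall_not_isRightDescent hM
    (cs.exists_eq_zero_of_irreducible hM irreducible) hfin.toFinset hclique v
  refine ⟨u, ?_⟩
  rw [cs.length_mul_of_forall_not_isLeftDescent hM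
    fun i hi hw => hvu i (hfin.mem_toFinset.mpr hw) hi, hu]
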